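/- Let A, B be positive semidefinite matrices with A + B invertible, and let U be a unitary with √A·√B·U = √(√A·B·√A). If λ₁ ≠ λ₂ are two eigenvalues of the pencil (√B, U√A), then the corresponding eigenspaces Null(√B − λ₁·U√A) and Null(√B − λ₂·U√A) intersect trivially (where the eigenspace for λ = ∞ is Null(√A)). -/

import Mathlib

open scoped ComplexOrder

open scoped MatrixOrder Matrix.Norms.L2Operator in
open Classical in
/-- The unique positive semidefinite square root of a positive semidefinite matrix
(junk value 0 otherwise). -/
noncomputable def psqrt {n : Type*} [Fintype n] [DecidableEq n] (X : Matrix n n ℂ) :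
    Matrix n n ℂ :=
  if h : X.PosSemidef then CFC.sqrt X else 0

/-- The range (support) of a matrix, i.e. the orthogonal complement of its kernel. -/
noncomputable def msupp {n : Type*} [Fintype n] [DecidableEq n] (X : Matrix n n ℂ) :
    Submodule ℂ (EuclideanSpace ℂ n) :=
  (LinearMap.ker (Matrix.toEuclideanLin X))ᗮ

/-- The kernel of a matrix, as a subspace of Euclidean space. -/
noncomputable def mker {n : Type*} [Fintype n] [DecidableEq n] (X : Matrix n n ℂ) :
    Submodule ℂ (EuclideanSpace ℂ n) :=
  LinearMap.ker (Matrix.toEuclideanLin X)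

/-- The generalized geometric mean M(A,B) = √A · √(√(A⁺) B √(A⁺)) · √A, where Ap
stands for the Moore–Penrose pseudoinverse A⁺ of A. -/
noncomputable def geoMean {n : Type*} [Fintype n] [DecidableEq n]
    (A Ap B : Matrix n n ℂ) : Matrix n n ℂ :=
  psqrt A * psqrt (psqrt Ap * B * psqrt Ap) * psqrt A

/-!
A vector lying in two distinct eigenspaces of a pencil `(K, L)` lies in `ker K ⊓ ker L`. For
`K = √B` and `L = U √A` these kernels are contained in `ker B` and `ker A`, and
`ker A ⊓ ker B ≤ ker (A + B) = ⊥`.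
-/

open scoped Matrix

section Pencil

variable {K V W : Type*} [Field K] [AddCommGroup V] [Module K V] [AddCommGroup W] [Module K W]

/-- `⊤ : WithTop K` stands for the eigenvalue `∞`. -/
def pencilEigenspace (f g : V →ₗ[K] W) : WithTop K → Submodule K V :=
  WithTop.recTopCoe (LinearMap.ker g) fun μ => LinearMap.ker (f - μ • g)

theorem ker_inf_ker_sub_smul (f g : V →ₗ[K] W) (μ : K) :
    LinearMap.ker g ⊓ LinearMap.ker (f - μ • g) = LinearMap.ker f ⊓ LinearMap.ker g := by
  ext x
  simp only [Submodule.mem_inf, LinearMap.mem_ker, LinearMap.sub_apply, LinearMap.smul_apply]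
  constructor
  · rintro ⟨hg, hfg⟩
    simpa [hg] using hfg
  · rintro ⟨hf, hg⟩
    simp [hf, hg]

theorem ker_sub_smul_inf_ker_sub_smul (f g : V →ₗ[K] W) {μ₁ μ₂ : K} (hμ : μ₁ ≠ μ₂) :
    LinearMap.ker (f - μ₁ • g) ⊓ LinearMap.ker (f - μ₂ • g) =
      LinearMap.ker f ⊓ LinearMap.ker g := by
  ext x
  simp only [Submodule.mem_inf, LinearMap.mem_ker, LinearMap.sub_apply, LinearMap.smul_apply,
    sub_eq_zero]
  constructor
  · rintro ⟨h₁, h₂⟩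
    have hg : (μ₁ - μ₂) • g x = 0 := by rw [sub_smul, ← h₁, ← h₂, sub_self]
    have hg : g x = 0 := (smul_eq_zero.1 hg).resolve_left (sub_ne_zero.2 hμ)
    exact ⟨by rw [h₁, hg, smul_zero], hg⟩
  · rintro ⟨hf, hg⟩
    simp [hf, hg]

theorem pencilEigenspace_inf_of_ne (f g : V →ₗ[K] W) {l₁ l₂ : WithTop K} (hne : l₁ ≠ l₂) :
    pencilEigenspace f g l₁ ⊓ pencilEigenspace f g l₂ = LinearMap.ker f ⊓ LinearMap.ker g := by
  induction l₁ using WithTop.recTopCoe <;> induction l₂ using WithTop.recTopCoe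
  · exact absurd rfl hne
  · exact ker_inf_ker_sub_smul f g _
  · rw [inf_comm]
    exact ker_inf_ker_sub_smul f g _
  · exact ker_sub_smul_inf_ker_sub_smul f g fun h => hne (congrArg _ h)

end Pencil

section Kernels

variable {n : Type*} [Fintype n] [DecidableEq n]

theorem mem_mker_iff {X : Matrix n n ℂ} {x : EuclideanSpace ℂ n} :
    x ∈ mker X ↔ X *ᵥ x.ofLp = 0 := by
  rw [mker, LinearMap.mem_ker, Matrix.toLpLin_apply]
  exact WithLp.toLp_eq_zero ..

theorem mker_mul_of_isUnit {U : Matrix n n ℂ} (hU : IsUnit U) (X : Matrix n n ℂ) :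
    mker (U * X) = mker X := by
  ext x
  rw [mem_mker_iff, mem_mker_iff, ← Matrix.mulVec_mulVec,
    (Matrix.mulVec_injective_iff_isUnit.2 hU).eq_iff' (Matrix.mulVec_zero U)]

theorem mker_inf_mker_eq_bot_of_isUnit_add {A B : Matrix n n ℂ} (hAB : IsUnit (A + B)) :
    mker A ⊓ mker B = ⊥ := by
  rw [eq_bot_iff]
  intro x hx
  obtain ⟨hA, hB⟩ := Submodule.mem_inf.1 hx
  rw [mem_mker_iff] at hA hB
  have hx : (A + B) *ᵥ x.ofLp = (A + B) *ᵥ 0 := by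
    rw [Matrix.add_mulVec, hA, hB, Matrix.mulVec_zero, add_zero]
  rw [Submodule.mem_bot, ← WithLp.ofLp_eq_zero]
  exact Matrix.mulVec_injective_iff_isUnit.2 hAB hx

open scoped MatrixOrder Matrix.Norms.L2Operator in
theorem mker_psqrt_le {A : Matrix n n ℂ} (hA : A.PosSemidef) : mker (psqrt A) ≤ mker A := by
  have hsqrt : psqrt A = CFC.sqrt A := dif_pos hA
  intro x hx
  rw [mem_mker_iff] at hx ⊢
  rw [← CFC.sqrt_mul_sqrt_self A hA.nonneg, ← Matrix.mulVec_mulVec, ← hsqrt, hx,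
    Matrix.mulVec_zero]

end Kernels

theorem pencil_eigenspaces_trivial_inter_general
    {n : Type*} [Fintype n] [DecidableEq n]
    (A B U : Matrix n n ℂ) (hA : A.PosSemidef) (hB : B.PosSemidef)
    (hAB : IsUnit (A + B))
    (hU : U ∈ Matrix.unitaryGroup n ℂ)
    (E : WithTop ℂ → Submodule ℂ (EuclideanSpace ℂ n))
    (hE : ∀ lam : ℂ, E (lam : WithTop ℂ) = mker (psqrt B - lam • (U * psqrt A)))
    (hEtop : E ⊤ = mker (psqrt A))
    (lam₁ lam₂ : WithTop ℂ) (hne : lam₁ ≠ lam₂) :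
    E lam₁ ⊓ E lam₂ = ⊥ := by
  have hUA : mker (U * psqrt A) = mker (psqrt A) :=
    mker_mul_of_isUnit (Unitary.isUnit_coe (U := ⟨U, hU⟩)) _
  have hE_pencil : E = pencilEigenspace (Matrix.toEuclideanLin (psqrt B))
      (Matrix.toEuclideanLin (U * psqrt A)) := by
    funext lam
    induction lam using WithTop.recTopCoe
    · rw [hEtop, ← hUA]
      rfl
    · rw [hE, mker, map_sub, map_smul]
      rfl
  rw [eq_bot_iff, hE_pencil, pencilEigenspace_inf_of_ne _ _ hne, inf_comm,
    ← mker_inf_mker_eq_bot_of_isUnit_add hAB]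
  exact inf_le_inf (hUA.le.trans (mker_psqrt_le hA)) (mker_psqrt_le hB)

/-- Distinct eigenspaces of the pencil (√B, U√A) intersect trivially, where the
eigenspace for λ ∈ ℂ is Null(√B − λ·U√A) and the eigenspace for λ = ∞ (⊤) is Null(√A). -/
theorem pencil_eigenspaces_trivial_inter
    {n : Type*} [Fintype n] [DecidableEq n]
    (A B U : Matrix n n ℂ) (hA : A.PosSemidef) (hB : B.PosSemidef)
    (hAB : IsUnit (A + B))
    (hU : U ∈ Matrix.unitaryGroup n ℂ)
    (hpolar : psqrt A * psqrt B * U = psqrt (psqrt A * B * psqrt A))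
    (E : WithTop ℂ → Submodule ℂ (EuclideanSpace ℂ n))
    (hE : ∀ lam : ℂ, E (lam : WithTop ℂ) = mker (psqrt B - lam • (U * psqrt A)))
    (hEtop : E ⊤ = mker (psqrt A))
    (lam₁ lam₂ : WithTop ℂ) (hne : lam₁ ≠ lam₂) :
    E lam₁ ⊓ E lam₂ = ⊥ :=
  pencil_eigenspaces_trivial_inter_general A B U hA hB hAB hU E hE hEtop lam₁ lam₂ hne
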